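/- arXiv:1405.2135 — 5 statements merged into one kernel-verified Lean document; each statement's English description precedes it below -/
import Mathlib

section
/- Flow equation (generalizing Goss): let F be a field complete with respect to a non-Archimedean norm, let a : ℕ → F satisfy ‖a_n‖ < c for all n with c > 0, let u : ℕ → F be a null sequence, and let z ∈ F with ‖z‖ < 1. Then all the series below converge and ∑_{n≥0} (∑_{k≥0} choose(n+k,k)·u_k·a_{n+k})·z^n = ∑_{j≥0} a_j·(∑_{m=0}^{j} choose(j,m)·u_m·z^{j-m}). In words: the flow of the umbra u applied to the bounded power series P = ∑ a_j T^j, evaluated at z, equals the umbral evaluation of P(z + α), where α^m is replaced by u_m. -/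
/-!
Expand the flow: the family `((n + k).choose k) * u k * a (n + k) * z ^ n` indexed by
`(n, k) ∈ ℕ × ℕ` has norm at most `C * ‖u k‖ * ‖z‖ ^ n` when `‖a‖ ≤ C`, since integers have
norm `≤ 1` in a non-Archimedean field; this tends to zero along the cofinite filter, so the
family is summable. Summing first over `k` gives the flow evaluated at `z`; summing instead over
the antidiagonals `n + k = j` gives `a j * ∑ m ≤ j, (j.choose m) * u m * z ^ (j - m)`.
-/

open Filter Topology Finset

theorem HasSum.sum_antidiagonal {α A : Type*} [AddCommMonoid α] [TopologicalSpace α]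
    [ContinuousAdd α] [RegularSpace α] [AddMonoid A] [HasAntidiagonal A]
    {f : A × A → α} {a : α} (hf : HasSum f a) :
    HasSum (fun n ↦ ∑ p ∈ antidiagonal n, f p) a :=
  (HasAntidiagonal.sigmaAntidiagonalEquivProd.hasSum_iff.mpr hf).sigma fun n ↦
    (antidiagonal n).hasSum fun p ↦ f p

def flowTerm {F : Type*} [Semiring F] (u a : ℕ → F) (z : F) (p : ℕ × ℕ) : F :=
  ((p.1 + p.2).choose p.2 : F) * u p.2 * a (p.1 + p.2) * z ^ p.1

section Flow

variable {F : Type*} [NormedField F] [IsUltrametricDist F]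

lemma norm_choose_mul_mul_le {u a : ℕ → F} {C : ℝ} (ha : ∀ n, ‖a n‖ ≤ C) (n k : ℕ) :
    ‖((n + k).choose k : F) * u k * a (n + k)‖ ≤ ‖u k‖ * C := by
  rw [norm_mul, norm_mul]
  calc _ ≤ 1 * ‖u k‖ * C := by
        gcongr
        exacts [IsUltrametricDist.norm_natCast_le_one F _, ha _]
    _ = ‖u k‖ * C := by rw [one_mul]

variable [CompleteSpace F] {u a : ℕ → F} {C : ℝ}

lemma summable_choose_mul_mul (ha : ∀ n, ‖a n‖ ≤ C) (hu : Tendsto u atTop (𝓝 0)) (n : ℕ) :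
    Summable fun k ↦ ((n + k).choose k : F) * u k * a (n + k) := by
  refine NonarchimedeanAddGroup.summable_of_tendsto_cofinite_zero ?_
  rw [Nat.cofinite_eq_atTop, tendsto_zero_iff_norm_tendsto_zero]
  refine squeeze_zero (fun _ ↦ norm_nonneg _) (norm_choose_mul_mul_le ha n) ?_
  simpa using hu.norm.mul_const C

lemma summable_flowTerm (ha : ∀ n, ‖a n‖ ≤ C) (hu : Tendsto u atTop (𝓝 0)) {z : F}
    (hz : ‖z‖ < 1) : Summable (flowTerm u a z) := by
  refine NonarchimedeanAddGroup.summable_of_tendsto_cofinite_zero ?_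
  rw [tendsto_zero_iff_norm_tendsto_zero]
  have hbound (p : ℕ × ℕ) : ‖flowTerm u a z p‖ ≤ ‖z‖ ^ p.1 * (‖u p.2‖ * C) := by
    rw [flowTerm, norm_mul, norm_pow, mul_comm]
    gcongr
    exact norm_choose_mul_mul_le ha p.1 p.2
  refine squeeze_zero (fun _ ↦ norm_nonneg _) hbound (tendsto_mul_cofinite_nhds_zero
    (f := fun n ↦ ‖z‖ ^ n) (g := fun k ↦ ‖u k‖ * C) ?_ ?_)
  · rw [Nat.cofinite_eq_atTop]
    exact tendsto_pow_atTop_nhds_zero_of_lt_one (norm_nonneg z) hz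
  · rw [Nat.cofinite_eq_atTop]
    simpa using hu.norm.mul_const C

end Flow

lemma sum_antidiagonal_flowTerm {F : Type*} [CommSemiring F] (u a : ℕ → F) (z : F) (j : ℕ) :
    ∑ p ∈ antidiagonal j, flowTerm u a z p =
      a j * ∑ m ∈ range (j + 1), (j.choose m : F) * u m * z ^ (j - m) := by
  rw [← Nat.sum_antidiagonal_swap, Nat.sum_antidiagonal_eq_sum_range_succ_mk, mul_sum]
  refine sum_congr rfl fun m hm ↦ ?_
  rw [Prod.swap_prod_mk, flowTerm, Nat.sub_add_cancel (Nat.lt_succ_iff.mp (mem_range.mp hm))]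
  ring

theorem flow_equation_general {F : Type*} [NormedField F] [CompleteSpace F]
    (hna : ∀ x y : F, ‖x + y‖ ≤ max ‖x‖ ‖y‖)
    (a : ℕ → F) (c : ℝ) (ha : ∀ n : ℕ, ‖a n‖ < c)
    (u : ℕ → F) (hu : Tendsto u atTop (nhds 0))
    (z : F) (hz : ‖z‖ < 1) :
    (∀ n : ℕ, Summable fun k : ℕ => ((n + k).choose k : F) * u k * a (n + k)) ∧
      (Summable fun n : ℕ =>
        (∑' k : ℕ, ((n + k).choose k : F) * u k * a (n + k)) * z ^ n) ∧
      (Summable fun j : ℕ =>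
        a j * ∑ m ∈ Finset.range (j + 1), (j.choose m : F) * u m * z ^ (j - m)) ∧
      ∑' n : ℕ, (∑' k : ℕ, ((n + k).choose k : F) * u k * a (n + k)) * z ^ n =
        ∑' j : ℕ, a j * ∑ m ∈ Finset.range (j + 1),
          (j.choose m : F) * u m * z ^ (j - m) := by
  have : IsUltrametricDist F := .isUltrametricDist_of_forall_norm_add_le_max_norm hna
  have ha' (n : ℕ) : ‖a n‖ ≤ c := (ha n).le
  have hsum := summable_flowTerm ha' hu hz
  have hrows : HasSum (fun n ↦ (∑' k, ((n + k).choose k : F) * u k * a (n + k)) * z ^ n)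
      (∑' p, flowTerm u a z p) := by
    simpa only [flowTerm, tsum_mul_right] using
      hsum.hasSum.prod_fiberwise fun n ↦ (hsum.prod_factor n).hasSum
  have hdiag : HasSum (fun j ↦ a j * ∑ m ∈ range (j + 1), (j.choose m : F) * u m * z ^ (j - m))
      (∑' p, flowTerm u a z p) := by
    simpa only [sum_antidiagonal_flowTerm] using hsum.hasSum.sum_antidiagonal
  exact ⟨summable_choose_mul_mul ha' hu, hrows.summable, hdiag.summable,
    hrows.tsum_eq.trans hdiag.tsum_eq.symm⟩

/-- The flow equation (generalizing Goss): for a bounded power series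
`P = ∑ a_j T^j`, a null sequence `u` and `‖z‖ < 1`, the flow of the umbra `u`
applied to `P` and evaluated at `z` equals the umbral evaluation of
`P(z + α)`, where `α^m` is replaced by `u_m`. -/
theorem flow_equation {F : Type*} [NormedField F] [CompleteSpace F]
    (hna : ∀ x y : F, ‖x + y‖ ≤ max ‖x‖ ‖y‖)
    (a : ℕ → F) (c : ℝ) (hc : 0 < c) (ha : ∀ n : ℕ, ‖a n‖ < c)
    (u : ℕ → F) (hu : Tendsto u atTop (nhds 0))
    (z : F) (hz : ‖z‖ < 1) :
    (∀ n : ℕ, Summable fun k : ℕ => ((n + k).choose k : F) * u k * a (n + k)) ∧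
      (Summable fun n : ℕ =>
        (∑' k : ℕ, ((n + k).choose k : F) * u k * a (n + k)) * z ^ n) ∧
      (Summable fun j : ℕ =>
        a j * ∑ m ∈ Finset.range (j + 1), (j.choose m : F) * u m * z ^ (j - m)) ∧
      ∑' n : ℕ, (∑' k : ℕ, ((n + k).choose k : F) * u k * a (n + k)) * z ^ n =
        ∑' j : ℕ, a j * ∑ m ∈ Finset.range (j + 1),
          (j.choose m : F) * u m * z ^ (j - m) :=
  flow_equation_general hna a c ha u hu z hz
end

section
/- Power rule for Hasse derivatives: let R be a commutative ring, P ∈ R⟦T⟧, n ≥ 1 and k ≥ 2. Then D^{(n)}(P^k) = ∑_{h=1}^{k} choose(k,h)·P^{k-h}·(∑_{(i₁,…,i_h)} D^{(i₁)}P ⋯ D^{(i_h)}P), where the inner sum runs over all h-tuples of positive integers i₁,…,i_h with i₁ + ⋯ + i_h = n. -/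
/-!
Sending `P` to `∑ⱼ D^(j)P · Xʲ`, i.e. `P(T)` to `P(T + X)`, is a ring homomorphism
`R⟦T⟧ → R⟦T⟧⟦X⟧`; multiplicativity is the Leibniz rule, which is inherited from polynomials
because each coefficient of `D^(k)(PQ)` only sees a truncation of `P` and `Q`.
Write the image of `P` as `P + E` with `E` of zero constant term. Then `D^(n)(P^k)` is the
coefficient of `Xⁿ` in `(P + E)^k = ∑ₕ choose(k,h) P^(k-h) E^h`, and the coefficient of `Xⁿ` in
`E^h` is the sum over `h`-tuples of positive indices adding up to `n`, since a zero index kills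
the product. For `n ≥ 1` the `h = 0` term vanishes.
-/

/-- The `k`-th Hasse derivative of a formal power series. -/
noncomputable def hasseDeriv {R : Type*} [CommRing R] (k : ℕ) (P : PowerSeries R) :
    PowerSeries R :=
  PowerSeries.mk fun n => ((n + k).choose k : R) * PowerSeries.coeff (n + k) P

open PowerSeries Finset

namespace PowerSeries

variable {R : Type*} [CommSemiring R]

theorem coeff_prod_eq_sum_antidiagonalTuple {h : ℕ} (f : Fin h → R⟦X⟧) (n : ℕ) :
    coeff n (∏ j, f j) = ∑ i ∈ Nat.antidiagonalTuple h n, ∏ j, coeff (i j) (f j) := by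
  classical
  rw [coeff_prod]
  refine sum_nbij' (⇑) Finsupp.equivFunOnFinite.symm ?_ ?_ ?_ ?_ ?_ <;>
    simp [Nat.mem_antidiagonalTuple]

theorem coeff_pow_eq_sum_pos_antidiagonalTuple {f : R⟦X⟧} (hf : constantCoeff f = 0)
    (h n : ℕ) :
    coeff n (f ^ h) = ∑ i ∈ (Nat.antidiagonalTuple h n).filter (fun i => ∀ j, 0 < i j),
      ∏ j, coeff (i j) f := by
  rw [← Fin.prod_const, coeff_prod_eq_sum_antidiagonalTuple, sum_filter_of_ne]
  intro i _ hi j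
  by_contra! hij
  exact hi (prod_eq_zero (mem_univ j) (by rwa [Nat.le_zero.mp hij, coeff_zero_eq_constantCoeff]))

end PowerSeries

section

variable {R : Type*} [CommRing R]

@[simp]
theorem coeff_hasseDeriv (k m : ℕ) (P : R⟦X⟧) :
    coeff m (hasseDeriv k P) = ((m + k).choose k : R) * coeff (m + k) P :=
  coeff_mk _ _

theorem hasseDeriv_zero (P : R⟦X⟧) : hasseDeriv 0 P = P := by
  ext m; simp

theorem hasseDeriv_one (k : ℕ) : hasseDeriv k (1 : R⟦X⟧) = if k = 0 then 1 else 0 := by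
  ext m
  rcases k with _ | k <;> simp [coeff_one]

theorem hasseDeriv_coe (k : ℕ) (p : Polynomial R) :
    hasseDeriv k (p : R⟦X⟧) = Polynomial.hasseDeriv k p := by
  ext m
  simp [Polynomial.hasseDeriv_coeff]

theorem coeff_hasseDeriv_trunc {k m N : ℕ} (h : m + k < N) (P : R⟦X⟧) :
    coeff m (hasseDeriv k (trunc N P)) = coeff m (hasseDeriv k P) := by
  simp [coeff_coe_trunc_of_lt h]

theorem hasseDeriv_mul (k : ℕ) (P Q : R⟦X⟧) :
    hasseDeriv k (P * Q) =
      ∑ ij ∈ antidiagonal k, hasseDeriv ij.1 P * hasseDeriv ij.2 Q := by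
  ext m
  obtain ⟨N, hN⟩ : ∃ N, m + k < N := ⟨_, Nat.lt_add_one _⟩
  calc coeff m (hasseDeriv k (P * Q))
      = coeff m (hasseDeriv k (trunc N P * trunc N Q : R⟦X⟧)) := by
        simp only [coeff_hasseDeriv, coeff_mul_eq_coeff_trunc_mul_trunc P Q hN]
    _ = ∑ ij ∈ antidiagonal k, coeff m
          (hasseDeriv ij.1 (trunc N P : R⟦X⟧) * hasseDeriv ij.2 (trunc N Q : R⟦X⟧)) := by
        rw [← Polynomial.coe_mul, hasseDeriv_coe, Polynomial.hasseDeriv_mul]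
        simp only [hasseDeriv_coe, ← Polynomial.coe_mul, Polynomial.coeff_coe,
          Polynomial.finsetSum_coeff]
    _ = coeff m (∑ ij ∈ antidiagonal k, hasseDeriv ij.1 P * hasseDeriv ij.2 Q) := by
        rw [map_sum]
        refine sum_congr rfl fun ij hij => ?_
        simp only [coeff_mul]
        refine sum_congr rfl fun cd hcd => ?_
        rw [HasAntidiagonal.mem_antidiagonal] at hij hcd
        rw [coeff_hasseDeriv_trunc (by omega), coeff_hasseDeriv_trunc (by omega)]

noncomputable def hasseDerivSeries : R⟦X⟧ →+* R⟦X⟧⟦X⟧ where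
  toFun P := mk fun j => hasseDeriv j P
  map_one' := by
    ext1 j
    simp [hasseDeriv_one, coeff_one]
  map_mul' P Q := by
    ext1 j
    simp [coeff_mul, hasseDeriv_mul]
  map_zero' := by
    ext
    simp
  map_add' P Q := by
    ext
    simp [mul_add]

theorem coeff_hasseDerivSeries (P : R⟦X⟧) (j : ℕ) :
    coeff j (hasseDerivSeries P) = hasseDeriv j P := by
  simp [hasseDerivSeries]

end

theorem hasseDeriv_pow_general {R : Type*} [CommRing R] (P : PowerSeries R)
    (n k : ℕ) (hn : 1 ≤ n) :
    hasseDeriv n (P ^ k) =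
      ∑ h ∈ Finset.Icc 1 k, (k.choose h : PowerSeries R) * P ^ (k - h) *
        ∑ i ∈ (Finset.Nat.antidiagonalTuple h n).filter (fun i => ∀ j, 0 < i j),
          ∏ j : Fin h, hasseDeriv (i j) P := by
  set E := hasseDerivSeries P - C P
  have hE : constantCoeff E = 0 := by
    simp [E, ← coeff_zero_eq_constantCoeff, coeff_hasseDerivSeries, hasseDeriv_zero]
  have hcoeffE : ∀ j, 0 < j → coeff j E = hasseDeriv j P := fun j hj => by
    simp [E, coeff_hasseDerivSeries, coeff_C, hj.ne']
  have hterm : ∀ h, coeff n (E ^ h * C P ^ (k - h) * (k.choose h : R⟦X⟧⟦X⟧)) =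
      (k.choose h : R⟦X⟧) * P ^ (k - h) * coeff n (E ^ h) := fun h => by
    rw [← map_pow, ← map_natCast C, mul_assoc, ← map_mul, coeff_mul_C]
    ring
  calc hasseDeriv n (P ^ k)
      = coeff n ((E + C P) ^ k) := by rw [sub_add_cancel, ← map_pow, coeff_hasseDerivSeries]
    _ = ∑ h ∈ range (k + 1), (k.choose h : R⟦X⟧) * P ^ (k - h) * coeff n (E ^ h) := by
        simp only [add_pow, map_sum, hterm]
    _ = ∑ h ∈ Icc 1 k, (k.choose h : R⟦X⟧) * P ^ (k - h) * coeff n (E ^ h) := by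
        rw [range_eq_Ico, sum_eq_sum_Ico_succ_bot (by omega : 0 < k + 1), pow_zero, coeff_one,
          if_neg (by omega), mul_zero, zero_add, zero_add, Ico_add_one_right_eq_Icc]
    _ = _ := by
        refine sum_congr rfl fun h _ => ?_
        rw [coeff_pow_eq_sum_pos_antidiagonalTuple hE]
        congr 1
        exact sum_congr rfl fun i hi =>
          prod_congr rfl fun j _ => hcoeffE _ ((mem_filter.mp hi).2 j)

/-- Power rule for Hasse derivatives:
`D^(n)(P^k) = ∑_{h=1}^{k} choose(k,h)·P^{k-h}·(∑ D^(i₁)P ⋯ D^(i_h)P)`,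
the inner sum over all `h`-tuples of positive integers summing to `n`. -/
theorem hasseDeriv_pow {R : Type*} [CommRing R] (P : PowerSeries R)
    (n k : ℕ) (hn : 1 ≤ n) (hk : 2 ≤ k) :
    hasseDeriv n (P ^ k) =
      ∑ h ∈ Finset.Icc 1 k, (k.choose h : PowerSeries R) * P ^ (k - h) *
        ∑ i ∈ (Finset.Nat.antidiagonalTuple h n).filter (fun i => ∀ j, 0 < i j),
          ∏ j : Fin h, hasseDeriv (i j) P :=
  hasseDeriv_pow_general P n k hn
end

section
/- Goss's duality theorem (the 'if' direction): let F be a field of characteristic p > 0, complete with respect to a non-Archimedean norm. Let H be an additive generator with a two-sided composition inverse Hinv (Hinv∘H = T = H∘Hinv) which is also an additive generator. Let u : ℕ → F be a null sequence with u_0 = 1, and define v_k := ∑_{m≥0} (coeff_m(Hinv^k))·u_m. Then for every bounded P ∈ F⟦T⟧ one has (Flow(u,P))∘H = Flow(v, P∘H); i.e., the flow of v is conjugate to the flow of u under the additive isomorphism generated by H. -/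
/-!
Write `D⁽ʲ⁾` for the `j`-th Hasse derivative, so that `Flow(u, P) = ∑ⱼ uⱼ • D⁽ʲ⁾P`.
A series supported on powers of `p` is additive in characteristic `p`:
`H(X + Y) = H(X) + H(Y)`. Expanding `P(H(X + Y)) = P(H(X) + H(Y))` in `Y` gives the chain rule
`D⁽ᵏ⁾(P ∘ H) = ∑ₛ coeffₖ(Hˢ) • (D⁽ˢ⁾P) ∘ H`. Hence
`Flow(v, P ∘ H) = ∑ₛ (∑ₖ vₖ coeffₖ(Hˢ)) • (D⁽ˢ⁾P) ∘ H`, and the inner sum is `u` applied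
termwise to `Hˢ ∘ Hinv = Tˢ`, that is `uₛ`. All coefficients involved have norm at most `1` or `c`,
so in the complete non-archimedean field every interchange of summation is justified by the
sequences being null.
-/

open Filter

/-- Composition `P ∘ H` of power series, for `H` with zero constant
coefficient. -/
noncomputable def psComp {F : Type*} [Field F] (P H : PowerSeries F) : PowerSeries F :=
  PowerSeries.mk fun n => ∑ k ∈ Finset.range (n + 1),
    PowerSeries.coeff k P * PowerSeries.coeff n (H ^ k)

/-- The flow of the umbra `u` applied to the power series `P`: the `n`-th
coefficient is the (convergent) sum `∑_k choose(n+k,k)·u_k·a_{n+k}`. -/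
noncomputable def psFlow {F : Type*} [NormedField F] (u : ℕ → F) (P : PowerSeries F) :
    PowerSeries F :=
  PowerSeries.mk fun n =>
    ∑' k : ℕ, ((n + k).choose k : F) * u k * PowerSeries.coeff (n + k) P

/-- An additive generator: zero constant coefficient, supported on exponents
that are powers of `p`, all coefficients of norm at most `1`, and coefficient
of `T` of norm exactly `1`. -/
def IsAddGen {F : Type*} [NormedField F] (p : ℕ) (H : PowerSeries F) : Prop :=
  PowerSeries.constantCoeff H = 0 ∧
    (∀ n : ℕ, (¬ ∃ m : ℕ, n = p ^ m) → PowerSeries.coeff n H = 0) ∧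
    (∀ n : ℕ, ‖PowerSeries.coeff n H‖ ≤ 1) ∧ ‖PowerSeries.coeff 1 H‖ = 1

namespace Polynomial

variable {R : Type*} [CommSemiring R]

lemma eval₂_add_of_coeff_eq_zero_of_ne_pow {S : Type*} [CommSemiring S] (p : ℕ) [ExpChar S p]
    (f : R →+* S) {q : R[X]} (hq : ∀ n, (¬ ∃ m, n = p ^ m) → q.coeff n = 0) (a b : S) :
    q.eval₂ f (a + b) = q.eval₂ f a + q.eval₂ f b := by
  simp only [eval₂_eq_sum, Polynomial.sum, ← Finset.sum_add_distrib, ← mul_add]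
  refine Finset.sum_congr rfl fun n hn => ?_
  obtain ⟨m, rfl⟩ : ∃ m, n = p ^ m := by_contra fun h => mem_support_iff.mp hn (hq n h)
  rw [add_pow_expChar_pow]

lemma hasseDeriv_map_C (q : R[X]) (n : ℕ) :
    hasseDeriv n (q.map (C : R →+* R[X])) = (hasseDeriv n q).map C := by
  ext1 k
  simp [hasseDeriv_coeff]

-- In `R[X][X]`, `taylor X (q.map C)` is `q(X + Y)` with `Y` the inner variable.
lemma coeff_taylor_X_map_C (q : R[X]) (n : ℕ) :
    (taylor (X : R[X]) (q.map C)).coeff n = hasseDeriv n q := by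
  rw [taylor_coeff, hasseDeriv_map_C, eval_map, eval₂_C_X]

lemma taylor_X_map_C_of_coeff_eq_zero_of_ne_pow (p : ℕ) [ExpChar R p] {q : R[X]}
    (hq : ∀ n, (¬ ∃ m, n = p ^ m) → q.coeff n = 0) :
    taylor (X : R[X]) (q.map C) = q.map C + C q := by
  rw [taylor_apply, comp, eval₂_map, eval₂_add_of_coeff_eq_zero_of_ne_pow p _ hq, ← hom_eval₂,
    eval₂_C_X]
  rfl

lemma hasseDeriv_pow_of_coeff_eq_zero_of_ne_pow (p : ℕ) [ExpChar R p] {q : R[X]}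
    (hq : ∀ n, (¬ ∃ m, n = p ^ m) → q.coeff n = 0) (r k : ℕ) :
    hasseDeriv k (q ^ r) =
      ∑ m ∈ Finset.range (r + 1), C ((q ^ m).coeff k) * q ^ (r - m) * (r.choose m : R[X]) := by
  rw [← coeff_taylor_X_map_C, Polynomial.map_pow, taylor_pow,
    taylor_X_map_C_of_coeff_eq_zero_of_ne_pow p hq, add_pow, finsetSum_coeff]
  refine Finset.sum_congr rfl fun m _ => ?_
  rw [← Polynomial.map_pow, ← C_pow, ← C_eq_natCast, mul_assoc, ← C_mul, coeff_mul_C, coeff_map,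
    mul_assoc]

end Polynomial

open PowerSeries Topology

section CommSemiring

variable {R : Type*} [CommSemiring R]

lemma coeff_pow_eq_zero_of_lt {G : R⟦X⟧} (hG : constantCoeff G = 0) {j m : ℕ} (h : j < m) :
    coeff j (G ^ m) = 0 :=
  X_pow_dvd_iff.mp (pow_dvd_pow_of_dvd (X_dvd_iff.mpr hG) m) j h

lemma coeff_pow_eq_coeff_trunc_pow (H : R⟦X⟧) {j N : ℕ} (hj : j < N) (r : ℕ) :
    coeff j (H ^ r) = ((trunc N H) ^ r).coeff j := by
  have := congrArg (Polynomial.coeff · j) (trunc_trunc_pow H N r)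
  simpa [coeff_trunc, hj, ← Polynomial.coe_pow] using this.symm

noncomputable def psHasseDeriv (j : ℕ) (P : R⟦X⟧) : R⟦X⟧ :=
  mk fun n => ((n + j).choose j : R) * coeff (n + j) P

lemma coeff_psHasseDeriv (j n : ℕ) (P : R⟦X⟧) :
    coeff n (psHasseDeriv j P) = ((n + j).choose j : R) * coeff (n + j) P :=
  coeff_mk _ _

variable (p : ℕ) [ExpChar R p] {H : R⟦X⟧}

lemma constantCoeff_eq_zero_of_coeff_eq_zero_of_ne_pow
    (hH : ∀ n, (¬ ∃ m, n = p ^ m) → coeff n H = 0) : constantCoeff H = 0 := by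
  rw [← coeff_zero_eq_constantCoeff_apply]
  exact hH 0 fun ⟨m, hm⟩ => pow_ne_zero m (expChar_ne_zero R p) hm.symm

lemma choose_mul_coeff_pow_of_coeff_eq_zero_of_ne_pow
    (hH : ∀ n, (¬ ∃ m, n = p ^ m) → coeff n H = 0) (r n k : ℕ) :
    ((n + k).choose k : R) * coeff (n + k) (H ^ r) =
      ∑ m ∈ Finset.range (r + 1), coeff k (H ^ m) * coeff n (H ^ (r - m)) * r.choose m := by
  have hN : ∀ {j}, j ≤ n + k → ∀ a, coeff j (H ^ a) = (trunc (n + k + 1) H ^ a).coeff j :=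
    fun hj => coeff_pow_eq_coeff_trunc_pow H (Nat.lt_succ_of_le hj)
  have htrunc : ∀ j, (¬ ∃ m, j = p ^ m) → (trunc (n + k + 1) H).coeff j = 0 := fun j hj => by
    simp [coeff_trunc, hH j hj]
  rw [hN le_rfl, ← Polynomial.hasseDeriv_coeff,
    Polynomial.hasseDeriv_pow_of_coeff_eq_zero_of_ne_pow p htrunc, Polynomial.finsetSum_coeff]
  refine Finset.sum_congr rfl fun m _ => ?_
  rw [Polynomial.coeff_mul_natCast, Polynomial.coeff_C_mul, hN (by omega), hN (by omega)]

end CommSemiring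

section Field

variable {F : Type*} [Field F]

lemma coeff_psComp (P G : F⟦X⟧) (n : ℕ) :
    coeff n (psComp P G) = ∑ k ∈ Finset.range (n + 1), coeff k P * coeff n (G ^ k) :=
  coeff_mk _ _

lemma psComp_eq_subst {G : F⟦X⟧} (hG : constantCoeff G = 0) (P : F⟦X⟧) :
    psComp P G = P.subst G := by
  ext n
  rw [coeff_psComp, coeff_subst' (HasSubst.of_constantCoeff_zero' hG)]
  refine (finsum_eq_sum_of_support_subset _ fun k hk => ?_).symm
  by_contra hkn
  exact hk (by simp [coeff_pow_eq_zero_of_lt hG (by simpa using hkn : n < k)])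

lemma psComp_pow {G : F⟦X⟧} (hG : constantCoeff G = 0) (P : F⟦X⟧) (s : ℕ) :
    psComp (P ^ s) G = psComp P G ^ s := by
  simp only [psComp_eq_subst hG, subst_pow (HasSubst.of_constantCoeff_zero' hG)]

theorem psHasseDeriv_psComp (p : ℕ) [ExpChar F p] {H : F⟦X⟧}
    (hH : ∀ n, (¬ ∃ m, n = p ^ m) → coeff n H = 0) (P : F⟦X⟧) (k : ℕ) :
    psHasseDeriv k (psComp P H) =
      ∑ s ∈ Finset.range (k + 1), coeff k (H ^ s) • psComp (psHasseDeriv s P) H := by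
  have hH0 := constantCoeff_eq_zero_of_coeff_eq_zero_of_ne_pow p hH
  ext n
  set f : ℕ → ℕ → F := fun m j =>
    coeff (m + j) P * ((m + j).choose m) * coeff k (H ^ m) * coeff n (H ^ j)
  simp only [coeff_psHasseDeriv, coeff_psComp, map_sum, coeff_smul, smul_eq_mul, Finset.mul_sum]
  -- both sides sum `f m j` over a range containing `m ≤ k, j ≤ n`, outside which `f` vanishes
  calc _ = ∑ r ∈ Finset.range (n + k + 1), ∑ m ∈ Finset.range (r + 1), f m (r - m) := by
          refine Finset.sum_congr rfl fun r _ => ?_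
          rw [mul_left_comm, choose_mul_coeff_pow_of_coeff_eq_zero_of_ne_pow p hH, Finset.mul_sum]
          refine Finset.sum_congr rfl fun m hm => ?_
          rw [Finset.mem_range] at hm
          simp only [f, Nat.add_sub_cancel' (Nat.lt_succ_iff.mp hm)]
          ring
    _ = ∑ m ∈ Finset.range (n + k + 1), ∑ j ∈ Finset.range (n + k + 1 - m), f m j :=
          Finset.sum_range_diag_flip _ _
    _ = ∑ m ∈ Finset.range (k + 1), ∑ j ∈ Finset.range (n + 1), f m j := by
          rw [← Finset.sum_subset (Finset.range_subset_range.mpr (show k + 1 ≤ n + k + 1 by omega))]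
          · refine Finset.sum_congr rfl fun m hm => (Finset.sum_subset
              (Finset.range_subset_range.mpr (by simp at hm; omega)) fun j _ hj => ?_).symm
            simp [f, coeff_pow_eq_zero_of_lt hH0 (by simpa using hj : n < j)]
          · intro m _ hm
            simp [f, coeff_pow_eq_zero_of_lt hH0 (by simpa using hm : k < m)]
    _ = _ := by
          refine Finset.sum_congr rfl fun m _ => Finset.sum_congr rfl fun j _ => ?_
          simp only [f, add_comm m j]
          ring

end Field

section Ultrametric

variable {E : Type*} [NormedAddCommGroup E] [IsUltrametricDist E] [CompleteSpace E]

lemma summable_of_norm_le_of_tendsto_zero {ι : Type*} {f : ι → E} {w : ι → ℝ}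
    (hw : Tendsto w cofinite (𝓝 0)) (hf : ∀ i, ‖f i‖ ≤ w i) : Summable f :=
  NonarchimedeanAddGroup.summable_of_tendsto_cofinite_zero (squeeze_zero_norm hf hw)

lemma tsum_comm_of_eq_zero_of_lt {f : ℕ → ℕ → E} {w : ℕ → ℝ} (hw : Tendsto w atTop (𝓝 0))
    (hf : ∀ i j, ‖f i j‖ ≤ w i) (hzero : ∀ i j, i < j → f i j = 0) :
    ∑' i, ∑' j, f i j = ∑' j, ∑' i, f i j := by
  refine (Summable.tsum_comm (NonarchimedeanAddGroup.summable_of_tendsto_cofinite_zero ?_)).symm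
  rw [NormedAddGroup.tendsto_nhds_zero]
  intro ε hε
  obtain ⟨K, hK⟩ := eventually_atTop.mp (hw.eventually (gt_mem_nhds hε))
  refine ((Set.finite_Iio K).prod (Set.finite_Iio K)).subset fun ⟨i, j⟩ hij => ?_
  replace hij : ε ≤ ‖f i j‖ := not_lt.mp hij
  have hi : i < K := by
    by_contra! h
    exact (hij.trans (hf i j)).not_gt (hK i h)
  have hji : j ≤ i := by
    by_contra! h
    rw [hzero i j h, norm_zero] at hij
    exact hij.not_gt hε
  exact ⟨hi, hji.trans_lt hi⟩

end Ultrametric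

section NormedField

variable {F : Type*} [NormedField F]

lemma coeff_psFlow (u : ℕ → F) (P : F⟦X⟧) (n : ℕ) :
    coeff n (psFlow u P) = ∑' k, u k * coeff n (psHasseDeriv k P) := by
  simp only [psFlow, coeff_mk, coeff_psHasseDeriv]
  exact tsum_congr fun k => by ring

noncomputable def umbraEval (u : ℕ → F) (P : F⟦X⟧) : F :=
  ∑' m, coeff m P * u m

variable [IsUltrametricDist F]

lemma norm_coeff_pow_le_one {G : F⟦X⟧} (hG : ∀ n, ‖coeff n G‖ ≤ 1) (m j : ℕ) :
    ‖coeff j (G ^ m)‖ ≤ 1 := by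
  induction m generalizing j with
  | zero => rw [pow_zero, coeff_one]; split_ifs <;> simp
  | succ m ih =>
    rw [pow_succ, coeff_mul]
    refine IsUltrametricDist.norm_sum_le_of_forall_le_of_nonneg zero_le_one fun q _ => ?_
    rw [norm_mul]
    exact mul_le_one₀ (ih _) (norm_nonneg _) (hG _)

lemma norm_coeff_psHasseDeriv_le {P : F⟦X⟧} {c : ℝ} (hP : ∀ n, ‖coeff n P‖ ≤ c) (j n : ℕ) :
    ‖coeff n (psHasseDeriv j P)‖ ≤ c := by
  rw [coeff_psHasseDeriv, norm_mul]
  exact (mul_le_of_le_one_left (norm_nonneg _)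
    (IsUltrametricDist.norm_natCast_le_one F _)).trans (hP _)

lemma norm_coeff_psComp_le {P G : F⟦X⟧} {c : ℝ} (hP : ∀ n, ‖coeff n P‖ ≤ c)
    (hG : ∀ n, ‖coeff n G‖ ≤ 1) (n : ℕ) : ‖coeff n (psComp P G)‖ ≤ c := by
  rw [coeff_psComp]
  refine IsUltrametricDist.norm_sum_le_of_forall_le_of_nonneg ((norm_nonneg _).trans (hP 0))
    fun k _ => ?_
  rw [norm_mul]
  exact (mul_le_of_le_one_right (norm_nonneg _) (norm_coeff_pow_le_one hG k n)).trans (hP k)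

lemma tendsto_umbraEval_pow {G : F⟦X⟧} (hG0 : constantCoeff G = 0)
    (hG : ∀ n, ‖coeff n G‖ ≤ 1) {u : ℕ → F} (hu : Tendsto u atTop (𝓝 0)) :
    Tendsto (fun k => umbraEval u (G ^ k)) atTop (𝓝 0) := by
  rw [NormedAddGroup.tendsto_nhds_zero] at hu ⊢
  intro ε hε
  obtain ⟨K, hK⟩ := eventually_atTop.mp (hu (ε / 2) (half_pos hε))
  filter_upwards [eventually_ge_atTop K] with k hk
  refine (IsUltrametricDist.norm_tsum_le_of_forall_le_of_nonneg (half_pos hε).le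
    fun m => ?_).trans_lt (half_lt_self hε)
  rcases lt_or_ge m k with hm | hm
  · simpa [coeff_pow_eq_zero_of_lt hG0 hm] using (half_pos hε).le
  · rw [norm_mul]
    exact (mul_le_of_le_one_left (norm_nonneg _) (norm_coeff_pow_le_one hG k m)).trans
      (hK m (hk.trans hm)).le

variable [CompleteSpace F]

lemma summable_mul_of_tendsto_zero {u b : ℕ → F} {c : ℝ} (hu : Tendsto u atTop (𝓝 0))
    (hb : ∀ j, ‖b j‖ ≤ c) : Summable fun j => u j * b j := by
  refine summable_of_norm_le_of_tendsto_zero (w := fun j => ‖u j‖ * c) ?_ fun j => ?_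
  · rw [Nat.cofinite_eq_atTop]
    simpa using (tendsto_zero_iff_norm_tendsto_zero.mp hu).mul_const c
  · rw [norm_mul]
    exact mul_le_mul_of_nonneg_left (hb j) (norm_nonneg _)

lemma coeff_psComp_psFlow {u : ℕ → F} (hu : Tendsto u atTop (𝓝 0)) {P : F⟦X⟧} {c : ℝ}
    (hP : ∀ n, ‖coeff n P‖ ≤ c) (G : F⟦X⟧) (n : ℕ) :
    coeff n (psComp (psFlow u P) G) = ∑' j, u j * coeff n (psComp (psHasseDeriv j P) G) := by
  simp only [coeff_psComp, coeff_psFlow, ← tsum_mul_right, Finset.mul_sum]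
  rw [← Summable.tsum_finsetSum fun k _ => ?_]
  · exact tsum_congr fun j => Finset.sum_congr rfl fun k _ => mul_assoc _ _ _
  · simpa only [mul_assoc] using summable_mul_of_tendsto_zero hu fun j =>
      (norm_mul_le _ _).trans (mul_le_mul_of_nonneg_right (norm_coeff_psHasseDeriv_le hP j k)
        (norm_nonneg (coeff n (G ^ k))))

lemma coeff_psFlow_psComp (p : ℕ) [ExpChar F p] {H : F⟦X⟧}
    (hHsupp : ∀ n, (¬ ∃ m, n = p ^ m) → coeff n H = 0) (hH : ∀ n, ‖coeff n H‖ ≤ 1)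
    {v : ℕ → F} (hv : Tendsto v atTop (𝓝 0)) {P : F⟦X⟧} {c : ℝ} (hP : ∀ n, ‖coeff n P‖ ≤ c)
    (n : ℕ) :
    coeff n (psFlow v (psComp P H)) =
      ∑' s, (∑' k, v k * coeff k (H ^ s)) * coeff n (psComp (psHasseDeriv s P) H) := by
  have hH0 := constantCoeff_eq_zero_of_coeff_eq_zero_of_ne_pow p hHsupp
  set Φ := fun s => coeff n (psComp (psHasseDeriv s P) H)
  have hΦ : ∀ s, ‖Φ s‖ ≤ c := fun s => norm_coeff_psComp_le (norm_coeff_psHasseDeriv_le hP s) hH n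
  calc coeff n (psFlow v (psComp P H))
      = ∑' k, ∑' s, v k * coeff k (H ^ s) * Φ s := by
        rw [coeff_psFlow]
        refine tsum_congr fun k => ?_
        rw [psHasseDeriv_psComp p hHsupp, map_sum, Finset.mul_sum,
          tsum_eq_sum (s := Finset.range (k + 1)) fun s hs => ?_]
        · simp [Φ, mul_assoc]
        · simp [coeff_pow_eq_zero_of_lt hH0 (by simpa using hs : k < s)]
    _ = ∑' s, ∑' k, v k * coeff k (H ^ s) * Φ s := by
        refine tsum_comm_of_eq_zero_of_lt (w := fun k => ‖v k‖ * c) ?_ (fun k s => ?_)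
          fun k s hks => by simp [coeff_pow_eq_zero_of_lt hH0 hks]
        · simpa using (tendsto_zero_iff_norm_tendsto_zero.mp hv).mul_const c
        · rw [norm_mul, norm_mul, mul_assoc]
          exact mul_le_mul_of_nonneg_left ((mul_le_of_le_one_left (norm_nonneg _)
            (norm_coeff_pow_le_one hH s k)).trans (hΦ s)) (norm_nonneg _)
    _ = _ := by simp only [Φ, tsum_mul_right]

lemma tsum_umbraEval_pow_mul_coeff_pow {H Hinv : F⟦X⟧} (hHinv0 : constantCoeff Hinv = 0)
    (hH : ∀ n, ‖coeff n H‖ ≤ 1) (hHinv : ∀ n, ‖coeff n Hinv‖ ≤ 1) (hcomp : psComp H Hinv = X)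
    {u : ℕ → F} (hu : Tendsto u atTop (𝓝 0)) (s : ℕ) :
    ∑' k, umbraEval u (Hinv ^ k) * coeff k (H ^ s) = u s := by
  calc ∑' k, umbraEval u (Hinv ^ k) * coeff k (H ^ s)
      = ∑' k, ∑' m, coeff m (Hinv ^ k) * u m * coeff k (H ^ s) := by
        simp only [umbraEval, tsum_mul_right]
    _ = ∑' m, ∑' k, coeff m (Hinv ^ k) * u m * coeff k (H ^ s) := by
        refine (tsum_comm_of_eq_zero_of_lt (tendsto_zero_iff_norm_tendsto_zero.mp hu)
          (fun m k => ?_) fun m k hmk => by simp [coeff_pow_eq_zero_of_lt hHinv0 hmk]).symm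
        rw [norm_mul, norm_mul]
        exact mul_le_of_le_one_right (by positivity) (norm_coeff_pow_le_one hH s k) |>.trans
          (mul_le_of_le_one_left (norm_nonneg _) (norm_coeff_pow_le_one hHinv k m))
    _ = ∑' m, coeff m (psComp (H ^ s) Hinv) * u m := by
        refine tsum_congr fun m => ?_
        rw [coeff_psComp, Finset.sum_mul, tsum_eq_sum (s := Finset.range (m + 1)) fun k hk => ?_]
        · exact Finset.sum_congr rfl fun k _ => by ring
        · simp [coeff_pow_eq_zero_of_lt hHinv0 (by simpa using hk : m < k)]
    _ = u s := by
        simp [psComp_pow hHinv0, hcomp, coeff_X_pow]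

end NormedField

theorem goss_duality_general {F : Type*} [NormedField F] [CompleteSpace F]
    (hna : ∀ x y : F, ‖x + y‖ ≤ max ‖x‖ ‖y‖)
    (p : ℕ) (hp : p.Prime) (hchar : CharP F p)
    (H Hinv : PowerSeries F) (hH : IsAddGen p H) (hHinv : IsAddGen p Hinv)
    (hinv₂ : psComp H Hinv = PowerSeries.X)
    (u : ℕ → F) (hu : Tendsto u atTop (nhds 0))
    (P : PowerSeries F) (c : ℝ)
    (hP : ∀ n : ℕ, ‖PowerSeries.coeff n P‖ < c) :
    psComp (psFlow u P) H =
      psFlow (fun k => ∑' m : ℕ, PowerSeries.coeff m (Hinv ^ k) * u m)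
        (psComp P H) := by
  have : IsUltrametricDist F := .isUltrametricDist_of_forall_norm_add_le_max_norm hna
  have : Fact p.Prime := ⟨hp⟩
  obtain ⟨-, hHsupp, hHle, -⟩ := hH
  obtain ⟨hHinv0, -, hHinvle, -⟩ := hHinv
  have hPc : ∀ n, ‖coeff n P‖ ≤ c := fun n => (hP n).le
  ext n
  calc coeff n (psComp (psFlow u P) H)
      = ∑' s, u s * coeff n (psComp (psHasseDeriv s P) H) := coeff_psComp_psFlow hu hPc H n
    _ = ∑' s, (∑' k, umbraEval u (Hinv ^ k) * coeff k (H ^ s)) *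
          coeff n (psComp (psHasseDeriv s P) H) := by
        simp_rw [tsum_umbraEval_pow_mul_coeff_pow hHinv0 hHle hHinvle hinv₂ hu]
    _ = _ :=
        (coeff_psFlow_psComp p hHsupp hHle (tendsto_umbraEval_pow hHinv0 hHinvle hu) hPc n).symm

/-- Goss's duality theorem (the "if" direction): with
`v_k := ∑_m coeff_m(Hinv^k)·u_m`, the flow of `v` is conjugate to the flow of
`u` under the additive isomorphism generated by `H`:
`(Flow(u,P)) ∘ H = Flow(v, P ∘ H)` for every bounded `P`. -/
theorem goss_duality {F : Type*} [NormedField F] [CompleteSpace F]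
    (hna : ∀ x y : F, ‖x + y‖ ≤ max ‖x‖ ‖y‖)
    (p : ℕ) (hp : p.Prime) (hchar : CharP F p)
    (H Hinv : PowerSeries F) (hH : IsAddGen p H) (hHinv : IsAddGen p Hinv)
    (hinv₁ : psComp Hinv H = PowerSeries.X) (hinv₂ : psComp H Hinv = PowerSeries.X)
    (u : ℕ → F) (hu : Tendsto u atTop (nhds 0)) (hu0 : u 0 = 1)
    (P : PowerSeries F) (c : ℝ) (hc : 0 < c)
    (hP : ∀ n : ℕ, ‖PowerSeries.coeff n P‖ < c) :
    psComp (psFlow u P) H =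
      psFlow (fun k => ∑' m : ℕ, PowerSeries.coeff m (Hinv ^ k) * u m)
        (psComp P H) :=
  goss_duality_general hna p hp hchar H Hinv hH hHinv hinv₂ u hu P c hP
end

section
/- Inversion of the dual moment sequence: let F be a field complete with respect to a non-Archimedean norm, and let H, Hinv ∈ F⟦T⟧ each have zero constant coefficient and all coefficients of norm ≤ 1, with Hinv∘H = T = H∘Hinv under power series substitution. Let u : ℕ → F be a null sequence and set v_k := ∑_{m≥0} (coeff_m(Hinv^k))·u_m. Then for every k ≥ 0 the family m ↦ (coeff_m(H^k))·v_m is summable and u_k = ∑_{m≥0} (coeff_m(H^k))·v_m. -/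
open Filter

/-!
The matrices `(coeff m (H ^ k))` and `(coeff n (Hinv ^ m))` are upper triangular, and the
identity `H ∘ Hinv = T` says that their product is the identity matrix. Since all their entries
have norm `≤ 1`, in a complete non-Archimedean field the double series
`∑ m, ∑ n, coeff m (H ^ k) * coeff n (Hinv ^ m) * u n` converges unconditionally for a null
sequence `u`, so its order of summation may be swapped, and summing over `m` first leaves `u k`.
-/

namespace PowerSeries

section Order

variable {R : Type*} [CommSemiring R]

theorem coeff_pow_eq_zero_of_lt {G : PowerSeries R} (hG : constantCoeff G = 0) {k n : ℕ}
    (h : n < k) : coeff n (G ^ k) = 0 :=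
  X_pow_dvd_iff.mp (pow_dvd_pow_of_dvd (X_dvd_iff.mpr hG) k) n h

end Order

section Composition

variable {F : Type*} [Field F]

theorem psComp_eq_subst {G : PowerSeries F} (hG : constantCoeff G = 0) (P : PowerSeries F) :
    psComp P G = P.subst G := by
  ext n
  rw [coeff_subst' (HasSubst.of_constantCoeff_zero' hG),
    finsum_eq_sum_of_support_subset (s := Finset.range (n + 1))]
  · simp [psComp, smul_eq_mul]
  · intro d hd
    simp only [Function.mem_support, ne_eq] at hd
    by_contra hdn
    simp only [Finset.coe_range, Set.mem_Iio, not_lt] at hdn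
    exact hd (by rw [coeff_pow_eq_zero_of_lt hG (by omega), smul_zero])

theorem sum_coeff_pow_mul_coeff_pow_of_psComp_eq_X {P G : PowerSeries F}
    (hG : constantCoeff G = 0) (h : psComp P G = X) (k n : ℕ) :
    ∑ m ∈ Finset.range (n + 1), coeff m (P ^ k) * coeff n (G ^ m) = if n = k then 1 else 0 := by
  have hpow : psComp (P ^ k) G = X ^ k := by
    rw [psComp_eq_subst hG, subst_pow (HasSubst.of_constantCoeff_zero' hG), ← psComp_eq_subst hG,
      h]
  simpa [psComp, coeff_X_pow] using congrArg (coeff n) hpow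

end Composition

section UnitBall

variable {R : Type*} [SeminormedRing R] [NormOneClass R] [IsUltrametricDist R]

theorem norm_coeff_pow_le_one {G : PowerSeries R} (hG : ∀ n, ‖coeff n G‖ ≤ 1) (k n : ℕ) :
    ‖coeff n (G ^ k)‖ ≤ 1 := by
  induction k generalizing n with
  | zero => rw [pow_zero, coeff_one]; split_ifs <;> simp
  | succ k ih =>
    rw [pow_succ, coeff_mul]
    refine IsUltrametricDist.norm_sum_le_of_forall_le_of_nonneg zero_le_one fun p _ => ?_
    exact (norm_mul_le _ _).trans (mul_le_one₀ (ih p.1) (norm_nonneg _) (hG p.2))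

end UnitBall

end PowerSeries

section TriangularSummation

variable {R : Type*} [NormedRing R] [IsUltrametricDist R] [CompleteSpace R]
  {b : ℕ → ℕ → R} {u : ℕ → R}

theorem summable_triangular_mul (hb : ∀ m n, ‖b m n‖ ≤ 1) (hbz : ∀ m n, n < m → b m n = 0)
    (hu : Tendsto u atTop (nhds 0)) : Summable fun p : ℕ × ℕ => b p.1 p.2 * u p.2 := by
  refine NonarchimedeanAddGroup.summable_of_tendsto_cofinite_zero ?_
  rw [NormedAddGroup.tendsto_nhds_zero]
  intro ε hε
  obtain ⟨N, hN⟩ := eventually_atTop.mp (NormedAddGroup.tendsto_nhds_zero.mp hu ε hε)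
  rw [eventually_cofinite]
  refine ((Set.finite_Iio N).prod (Set.finite_Iio N)).subset fun p hp => ?_
  simp only [Set.mem_ofPred_eq, not_lt] at hp
  have hcol : p.2 < N := by
    by_contra! h
    exact (hp.trans ((norm_mul_le _ _).trans (mul_le_of_le_one_left (norm_nonneg _)
      (hb p.1 p.2)))).not_gt (hN p.2 h)
  have hrow : p.1 ≤ p.2 := by
    by_contra! h
    rw [hbz p.1 p.2 h, zero_mul, norm_zero] at hp
    exact hp.not_gt hε
  exact ⟨hrow.trans_lt hcol, hcol⟩

theorem tsum_tsum_triangular_mul (hb : ∀ m n, ‖b m n‖ ≤ 1) (hbz : ∀ m n, n < m → b m n = 0)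
    (hu : Tendsto u atTop (nhds 0)) :
    ∑' m, ∑' n, b m n * u n = ∑' n, (∑ m ∈ Finset.range (n + 1), b m n) * u n := by
  rw [← Summable.tsum_comm (f := fun m n => b m n * u n) (summable_triangular_mul hb hbz hu)]
  refine tsum_congr fun n => ?_
  rw [Finset.sum_mul]
  refine tsum_eq_sum fun m hm => ?_
  rw [hbz m n (by simpa using hm), zero_mul]

end TriangularSummation

theorem dual_moment_inversion_general {F : Type*} [NormedField F] [CompleteSpace F]
    (hna : ∀ x y : F, ‖x + y‖ ≤ max ‖x‖ ‖y‖)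
    (H Hinv : PowerSeries F)
    (hHinv0 : PowerSeries.constantCoeff Hinv = 0)
    (hH1 : ∀ n : ℕ, ‖PowerSeries.coeff n H‖ ≤ 1)
    (hHinv1 : ∀ n : ℕ, ‖PowerSeries.coeff n Hinv‖ ≤ 1)
    (hinv₂ : psComp H Hinv = PowerSeries.X)
    (u : ℕ → F) (hu : Tendsto u atTop (nhds 0))
    (v : ℕ → F)
    (hv : ∀ k : ℕ, v k = ∑' m : ℕ, PowerSeries.coeff m (Hinv ^ k) * u m) :
    ∀ k : ℕ,
      (Summable fun m : ℕ => PowerSeries.coeff m (H ^ k) * v m) ∧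
        u k = ∑' m : ℕ, PowerSeries.coeff m (H ^ k) * v m := by
  intro k
  have : IsUltrametricDist F :=
    IsUltrametricDist.isUltrametricDist_of_forall_norm_add_le_max_norm hna
  set b : ℕ → ℕ → F := fun m n => PowerSeries.coeff m (H ^ k) * PowerSeries.coeff n (Hinv ^ m)
  have hb : ∀ m n, ‖b m n‖ ≤ 1 := fun m n => (norm_mul_le _ _).trans <|
    mul_le_one₀ (PowerSeries.norm_coeff_pow_le_one hH1 k m) (norm_nonneg _)
      (PowerSeries.norm_coeff_pow_le_one hHinv1 m n)
  have hbz : ∀ m n, n < m → b m n = 0 := fun m n h => by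
    simp only [b, PowerSeries.coeff_pow_eq_zero_of_lt hHinv0 h, mul_zero]
  have hrow : ∀ m, PowerSeries.coeff m (H ^ k) * v m = ∑' n, b m n * u n := fun m => by
    simp only [hv m, b, mul_assoc, tsum_mul_left]
  simp only [hrow]
  refine ⟨(summable_triangular_mul hb hbz hu).prod, ?_⟩
  simp only [tsum_tsum_triangular_mul hb hbz hu, b,
    PowerSeries.sum_coeff_pow_mul_coeff_pow_of_psComp_eq_X hHinv0 hinv₂, ite_mul, one_mul,
    zero_mul, tsum_ite_eq]

/-- Inversion of the dual moment sequence: if `v_k = ∑_m coeff_m(Hinv^k)·u_m`,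
then `u_k = ∑_m coeff_m(H^k)·v_m`, these families being summable. -/
theorem dual_moment_inversion {F : Type*} [NormedField F] [CompleteSpace F]
    (hna : ∀ x y : F, ‖x + y‖ ≤ max ‖x‖ ‖y‖)
    (H Hinv : PowerSeries F)
    (hH0 : PowerSeries.constantCoeff H = 0)
    (hHinv0 : PowerSeries.constantCoeff Hinv = 0)
    (hH1 : ∀ n : ℕ, ‖PowerSeries.coeff n H‖ ≤ 1)
    (hHinv1 : ∀ n : ℕ, ‖PowerSeries.coeff n Hinv‖ ≤ 1)
    (hinv₁ : psComp Hinv H = PowerSeries.X) (hinv₂ : psComp H Hinv = PowerSeries.X)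
    (u : ℕ → F) (hu : Tendsto u atTop (nhds 0))
    (v : ℕ → F)
    (hv : ∀ k : ℕ, v k = ∑' m : ℕ, PowerSeries.coeff m (Hinv ^ k) * u m) :
    ∀ k : ℕ,
      (Summable fun m : ℕ => PowerSeries.coeff m (H ^ k) * v m) ∧
        u k = ∑' m : ℕ, PowerSeries.coeff m (H ^ k) * v m :=
  dual_moment_inversion_general hna H Hinv hHinv0 hH1 hHinv1 hinv₂ u hu v hv
end

section
/- Admissibility is inherited by the dual sequence: let F be a field complete with respect to a non-Archimedean norm and let Q ∈ F⟦T⟧ have zero constant coefficient and all coefficients of norm ≤ 1. Let u : ℕ → F be a null sequence and define v_k := ∑_{m≥0} (coeff_m(Q^k))·u_m. Then each of these families is summable, v_0 = u_0, and v is again a null sequence; moreover ‖v_k‖ ≤ sup_{m ≥ k} ‖u_m‖ for every k (since Q^k has T-adic order ≥ k). -/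
/-!
For an ultrametric norm, coefficients of norm `≤ 1` are preserved under products, so
every `Q ^ k` has integral coefficients and the terms `coeff m (Q ^ k) * u m` are dominated by
`‖u m‖`, which gives summability. Since `Q ^ k` has `X`-adic order at least `k`, only the terms
with `m ≥ k` survive, and the ultrametric inequality for series bounds `‖v k‖` by the supremum
of the tail `‖u m‖`, `m ≥ k`, which tends to `0` with `k`.
-/

open Filter PowerSeries Topology

theorem PowerSeries.coeff_pow_eq_zero_of_lt_s19 {R : Type*} [Semiring R] {Q : R⟦X⟧}
    (hQ : constantCoeff Q = 0) {k m : ℕ} (hm : m < k) : coeff m (Q ^ k) = 0 :=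
  coeff_of_lt_order m ((Nat.cast_lt.2 hm).trans_le (le_order_pow_of_constantCoeff_eq_zero k hQ))

section Tail

variable {E : Type*} [SeminormedAddGroup E] {u : ℕ → E}

theorem bddAbove_range_norm_comp_add (hu : Tendsto u atTop (𝓝 0)) (k : ℕ) :
    BddAbove (Set.range fun m => ‖u (k + m)‖) :=
  (hu.norm.comp ((tendsto_add_atTop_nat k).congr fun m => add_comm m k)).bddAbove_range

theorem tendsto_iSup_norm_comp_add (hu : Tendsto u atTop (𝓝 0)) :
    Tendsto (fun k => ⨆ m, ‖u (k + m)‖) atTop (𝓝 0) := by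
  refine tendsto_order.2 ⟨fun a ha => Eventually.of_forall fun k => ?_, fun ε hε => ?_⟩
  · exact ha.trans_le (Real.iSup_nonneg fun m => norm_nonneg _)
  obtain ⟨N, hN⟩ :=
    eventually_atTop.1 ((tendsto_norm_zero.comp hu).eventually_lt_const (half_pos hε))
  filter_upwards [eventually_ge_atTop N] with k hk
  calc ⨆ m, ‖u (k + m)‖ ≤ ε / 2 :=
        ciSup_le fun m => (hN _ (hk.trans (Nat.le_add_right k m))).le
    _ < ε := half_lt_self hε

end Tail

section Ultrametric

variable {R : Type*} [NormedRing R] [IsUltrametricDist R]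

theorem PowerSeries.norm_coeff_mul_le_one {P Q : R⟦X⟧} (hP : ∀ n, ‖coeff n P‖ ≤ 1)
    (hQ : ∀ n, ‖coeff n Q‖ ≤ 1) (n : ℕ) : ‖coeff n (P * Q)‖ ≤ 1 := by
  rw [coeff_mul]
  refine IsUltrametricDist.norm_sum_le_of_forall_le_of_nonneg zero_le_one fun i _ => ?_
  calc ‖coeff i.1 P * coeff i.2 Q‖ ≤ ‖coeff i.1 P‖ * ‖coeff i.2 Q‖ := norm_mul_le _ _
    _ ≤ 1 := mul_le_one₀ (hP _) (norm_nonneg _) (hQ _)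

theorem PowerSeries.norm_coeff_pow_le_one_s19 [NormOneClass R] {Q : R⟦X⟧}
    (hQ : ∀ n, ‖coeff n Q‖ ≤ 1) (k n : ℕ) : ‖coeff n (Q ^ k)‖ ≤ 1 := by
  induction k generalizing n with
  | zero => rw [pow_zero, coeff_one]; split_ifs <;> simp
  | succ k ih => rw [pow_succ]; exact norm_coeff_mul_le_one ih hQ n

theorem summable_mul_of_norm_le_of_tendsto_zero [CompleteSpace R] {a u : ℕ → R} {C : ℝ}
    (ha : ∀ m, ‖a m‖ ≤ C) (hu : Tendsto u atTop (𝓝 0)) :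
    Summable fun m => a m * u m := by
  refine NonarchimedeanAddGroup.summable_of_tendsto_cofinite_zero ?_
  rw [Nat.cofinite_eq_atTop]
  refine squeeze_zero_norm (fun m => (norm_mul_le _ _).trans ?_)
    (by simpa using hu.norm.const_mul C)
  exact mul_le_mul_of_nonneg_right (ha m) (norm_nonneg _)

theorem norm_tsum_mul_le_iSup_norm_comp_add {a u : ℕ → R} {k : ℕ}
    (ha : ∀ m, ‖a m‖ ≤ 1) (ha_lt : ∀ m < k, a m = 0)
    (hu : BddAbove (Set.range fun m => ‖u (k + m)‖)) :
    ‖∑' m, a m * u m‖ ≤ ⨆ m, ‖u (k + m)‖ := by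
  refine IsUltrametricDist.norm_tsum_le_of_forall_le fun m => ?_
  rcases lt_or_ge m k with hm | hm
  · rw [ha_lt m hm, zero_mul, norm_zero]
    exact Real.iSup_nonneg fun m => norm_nonneg _
  · calc ‖a m * u m‖ ≤ ‖a m‖ * ‖u m‖ := norm_mul_le _ _
      _ ≤ ‖u (k + (m - k))‖ := by
        rw [Nat.add_sub_cancel' hm]
        exact mul_le_of_le_one_left (norm_nonneg _) (ha m)
      _ ≤ ⨆ m, ‖u (k + m)‖ := le_ciSup hu (m - k)

end Ultrametric

/-- Admissibility is inherited by the dual sequence: for `Q` with zero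
constant coefficient and integral coefficients and a null sequence `u`, the
sequence `v_k = ∑_m coeff_m(Q^k)·u_m` is well defined, satisfies `v_0 = u_0`,
is again null, and satisfies `‖v_k‖ ≤ sup_{m ≥ k} ‖u_m‖`. -/
theorem dual_sequence_null {F : Type*} [NormedField F] [CompleteSpace F]
    (hna : ∀ x y : F, ‖x + y‖ ≤ max ‖x‖ ‖y‖)
    (Q : PowerSeries F) (hQ0 : PowerSeries.constantCoeff Q = 0)
    (hQ1 : ∀ n : ℕ, ‖PowerSeries.coeff n Q‖ ≤ 1)
    (u : ℕ → F) (hu : Tendsto u atTop (nhds 0))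
    (v : ℕ → F)
    (hv : ∀ k : ℕ, v k = ∑' m : ℕ, PowerSeries.coeff m (Q ^ k) * u m) :
    (∀ k : ℕ, Summable fun m : ℕ => PowerSeries.coeff m (Q ^ k) * u m) ∧
      v 0 = u 0 ∧ Tendsto v atTop (nhds 0) ∧
      ∀ k : ℕ, ‖v k‖ ≤ ⨆ m : ℕ, ‖u (k + m)‖ := by
  have : IsUltrametricDist F := .isUltrametricDist_of_isNonarchimedean_norm hna
  have hQk := norm_coeff_pow_le_one_s19 hQ1
  have hbound (k : ℕ) : ‖v k‖ ≤ ⨆ m, ‖u (k + m)‖ := by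
    rw [hv k]
    exact norm_tsum_mul_le_iSup_norm_comp_add (hQk k) (fun m => coeff_pow_eq_zero_of_lt_s19 hQ0)
      (bddAbove_range_norm_comp_add hu k)
  refine ⟨fun k => summable_mul_of_norm_le_of_tendsto_zero (hQk k) hu, ?_,
    squeeze_zero_norm hbound (tendsto_iSup_norm_comp_add hu), hbound⟩
  rw [hv 0, tsum_eq_single 0 fun m hm => by rw [pow_zero, coeff_one, if_neg hm, zero_mul]]
  simp
end
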